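/- arXiv:1908.00540 — 2 statements merged into one kernel-verified Lean document; each statement's English description precedes it below -/
import Mathlib

section
/- Let N ≥ 1 and k₁, k₂, a₁, a₂ > 0. Define m_i = −(√(N²k_i² + 8) − Nk_i)/(4k_i) for i = 1,2, and set z_i(x) = −k_i m_i (|x|² + 1), and let λ₁ = −a₁ + Nk₁ + (a₁/8)(√(N²k₁²+8)−Nk₁)(√(N²k₂²+8)−Nk₂) + (Na₁k₁/4)(√(N²k₂²+8)−Nk₂) and λ₂ defined symmetrically (swapping indices 1 and 2). Then for all x ∈ ℝ^N: −(k₁/2)Δz₁(x) + |∇z₁(x)|²/2 = |x|² − (λ₁+a₁)z₁(x) + a₁z₂(x), and −(k₂/2)Δz₂(x) + |∇z₂(x)|²/2 = |x|² − (λ₂+a₂)z₂(x) + a₂z₁(x). -/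
noncomputable def lap {N : ℕ} (f : EuclideanSpace ℝ (Fin N) → ℝ)
    (x : EuclideanSpace ℝ (Fin N)) : ℝ :=
  ∑ i : Fin N, iteratedFDeriv ℝ 2 f x ![EuclideanSpace.single i 1, EuclideanSpace.single i 1]

/-!
Both equations reduce to scalar identities because `z = c (‖x‖² + 1)` has `Δz = 2Nc` and
`∇z = 2c x`. The `‖x‖²`-terms balance exactly when `2c² + Nkc = 1`, whose positive root is
`c = (√(N²k² + 8) - Nk)/4 = -k m`; the discount rate `λ` is then chosen so that
`(λ + a) c₁ = N k c₁ + a c₂`, which cancels the coupling term and the constants.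
-/

open InnerProductSpace

section NormSqAddOne

variable {F : Type*} [NormedAddCommGroup F] [InnerProductSpace ℝ F]

theorem hasFDerivAt_const_mul_norm_sq_add_one (c : ℝ) (x : F) :
    HasFDerivAt (fun y : F => c * (‖y‖ ^ 2 + 1)) ((2 * c) • innerSL ℝ x) x := by
  refine (((hasStrictFDerivAt_norm_sq x).hasFDerivAt.add_const 1).const_mul c).congr_fderiv ?_
  ext v
  simp only [smul_apply, smul_eq_mul, nsmul_eq_mul, Nat.cast_ofNat]
  ring

theorem fderiv_const_mul_norm_sq_add_one (c : ℝ) :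
    fderiv ℝ (fun y : F => c * (‖y‖ ^ 2 + 1)) = (2 * c) • innerSL ℝ := by
  funext x
  exact (hasFDerivAt_const_mul_norm_sq_add_one c x).fderiv

theorem gradient_const_mul_norm_sq_add_one [CompleteSpace F] (c : ℝ) (x : F) :
    gradient (fun y : F => c * (‖y‖ ^ 2 + 1)) x = (2 * c) • x := by
  refine HasGradientAt.gradient ?_
  rw [hasGradientAt_iff_hasFDerivAt]
  refine (hasFDerivAt_const_mul_norm_sq_add_one c x).congr_fderiv ?_
  ext v
  simp [toDual_apply_apply]

theorem iteratedFDeriv_two_const_mul_norm_sq_add_one (c : ℝ) (x v w : F) :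
    iteratedFDeriv ℝ 2 (fun y : F => c * (‖y‖ ^ 2 + 1)) x ![v, w] = 2 * c * ⟪v, w⟫_ℝ := by
  rw [iteratedFDeriv_two_apply, fderiv_const_mul_norm_sq_add_one,
    ((2 * c) • innerSL ℝ (E := F)).fderiv]
  simp only [Matrix.cons_val_zero, Matrix.cons_val_one, smul_apply, smul_eq_mul]
  rfl

end NormSqAddOne

theorem lap_const_mul_norm_sq_add_one {N : ℕ} (c : ℝ) (x : EuclideanSpace ℝ (Fin N)) :
    lap (fun y => c * (‖y‖ ^ 2 + 1)) x = 2 * c * N := by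
  simp [lap, iteratedFDeriv_two_const_mul_norm_sq_add_one, mul_comm]

/-- The positive root of `2 c² + n k c = 1`. -/
noncomputable def quadCoeff (n k : ℝ) : ℝ :=
  (√(n ^ 2 * k ^ 2 + 8) - n * k) / 4

theorem two_mul_quadCoeff_sq_add (n k : ℝ) :
    2 * quadCoeff n k ^ 2 + n * k * quadCoeff n k = 1 := by
  have hs : √(n ^ 2 * k ^ 2 + 8) ^ 2 = n ^ 2 * k ^ 2 + 8 := Real.sq_sqrt (by positivity)
  unfold quadCoeff
  linear_combination hs / 8

theorem neg_mul_eq_quadCoeff {n k m : ℝ} (hk : k ≠ 0)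
    (hm : m = -((√(n ^ 2 * k ^ 2 + 8) - n * k) / (4 * k))) :
    -k * m = quadCoeff n k := by
  rw [hm, quadCoeff]
  field_simp

theorem add_mul_quadCoeff {n k k' a l : ℝ}
    (hl : l = -a + n * k + a / 8 * (√(n ^ 2 * k ^ 2 + 8) - n * k) * (√(n ^ 2 * k' ^ 2 + 8) - n * k')
      + n * a * k / 4 * (√(n ^ 2 * k' ^ 2 + 8) - n * k')) :
    (l + a) * quadCoeff n k = n * k * quadCoeff n k + a * quadCoeff n k' := by
  have h := two_mul_quadCoeff_sq_add n k
  rw [hl]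
  unfold quadCoeff at *
  linear_combination a * (√(n ^ 2 * k' ^ 2 + 8) - n * k') / 4 * h

theorem coupled_hjb_const_mul_norm_sq_add_one {N : ℕ} {k a l c c' : ℝ}
    (hc : 2 * c ^ 2 + N * k * c = 1) (hl : (l + a) * c = N * k * c + a * c')
    (x : EuclideanSpace ℝ (Fin N)) :
    -(k / 2) * lap (fun y => c * (‖y‖ ^ 2 + 1)) x
        + ‖gradient (fun y => c * (‖y‖ ^ 2 + 1)) x‖ ^ 2 / 2
      = ‖x‖ ^ 2 - (l + a) * (c * (‖x‖ ^ 2 + 1)) + a * (c' * (‖x‖ ^ 2 + 1)) := by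
  rw [lap_const_mul_norm_sq_add_one, gradient_const_mul_norm_sq_add_one, norm_smul,
    Real.norm_eq_abs, mul_pow, sq_abs]
  linear_combination ‖x‖ ^ 2 * hc + (‖x‖ ^ 2 + 1) * hl

theorem stmt_10_general {N : ℕ} (k₁ k₂ a₁ a₂ : ℝ)
    (hk₁ : 0 < k₁) (hk₂ : 0 < k₂)
    (m₁ m₂ : ℝ)
    (hm₁ : m₁ = -((Real.sqrt ((N : ℝ) ^ 2 * k₁ ^ 2 + 8) - N * k₁) / (4 * k₁)))
    (hm₂ : m₂ = -((Real.sqrt ((N : ℝ) ^ 2 * k₂ ^ 2 + 8) - N * k₂) / (4 * k₂)))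
    (z₁ z₂ : EuclideanSpace ℝ (Fin N) → ℝ)
    (hz₁ : ∀ x, z₁ x = -k₁ * m₁ * (‖x‖ ^ 2 + 1))
    (hz₂ : ∀ x, z₂ x = -k₂ * m₂ * (‖x‖ ^ 2 + 1))
    (l₁ l₂ : ℝ)
    (hl₁ : l₁ = -a₁ + N * k₁
        + a₁ / 8 * (Real.sqrt ((N : ℝ) ^ 2 * k₁ ^ 2 + 8) - N * k₁)
            * (Real.sqrt ((N : ℝ) ^ 2 * k₂ ^ 2 + 8) - N * k₂)
        + N * a₁ * k₁ / 4 * (Real.sqrt ((N : ℝ) ^ 2 * k₂ ^ 2 + 8) - N * k₂))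
    (hl₂ : l₂ = -a₂ + N * k₂
        + a₂ / 8 * (Real.sqrt ((N : ℝ) ^ 2 * k₁ ^ 2 + 8) - N * k₁)
            * (Real.sqrt ((N : ℝ) ^ 2 * k₂ ^ 2 + 8) - N * k₂)
        + N * a₂ * k₂ / 4 * (Real.sqrt ((N : ℝ) ^ 2 * k₁ ^ 2 + 8) - N * k₁)) :
    ∀ x : EuclideanSpace ℝ (Fin N),
      -(k₁ / 2) * lap z₁ x + ‖gradient z₁ x‖ ^ 2 / 2
        = ‖x‖ ^ 2 - (l₁ + a₁) * z₁ x + a₁ * z₂ x ∧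
      -(k₂ / 2) * lap z₂ x + ‖gradient z₂ x‖ ^ 2 / 2
        = ‖x‖ ^ 2 - (l₂ + a₂) * z₂ x + a₂ * z₁ x := by
  intro x
  have e₁ : z₁ = fun y => quadCoeff N k₁ * (‖y‖ ^ 2 + 1) := by
    funext y
    rw [hz₁, neg_mul_eq_quadCoeff hk₁.ne' hm₁]
  have e₂ : z₂ = fun y => quadCoeff N k₂ * (‖y‖ ^ 2 + 1) := by
    funext y
    rw [hz₂, neg_mul_eq_quadCoeff hk₂.ne' hm₂]
  subst e₁ e₂
  exact ⟨coupled_hjb_const_mul_norm_sq_add_one (two_mul_quadCoeff_sq_add N k₁)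
      (add_mul_quadCoeff hl₁) x,
    coupled_hjb_const_mul_norm_sq_add_one (two_mul_quadCoeff_sq_add N k₂)
      (add_mul_quadCoeff (by rw [hl₂]; ring)) x⟩

theorem stmt_10 {N : ℕ} (hN : 1 ≤ N) (k₁ k₂ a₁ a₂ : ℝ)
    (hk₁ : 0 < k₁) (hk₂ : 0 < k₂) (ha₁ : 0 < a₁) (ha₂ : 0 < a₂)
    (m₁ m₂ : ℝ)
    (hm₁ : m₁ = -((Real.sqrt ((N : ℝ) ^ 2 * k₁ ^ 2 + 8) - N * k₁) / (4 * k₁)))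
    (hm₂ : m₂ = -((Real.sqrt ((N : ℝ) ^ 2 * k₂ ^ 2 + 8) - N * k₂) / (4 * k₂)))
    (z₁ z₂ : EuclideanSpace ℝ (Fin N) → ℝ)
    (hz₁ : ∀ x, z₁ x = -k₁ * m₁ * (‖x‖ ^ 2 + 1))
    (hz₂ : ∀ x, z₂ x = -k₂ * m₂ * (‖x‖ ^ 2 + 1))
    (l₁ l₂ : ℝ)
    (hl₁ : l₁ = -a₁ + N * k₁
        + a₁ / 8 * (Real.sqrt ((N : ℝ) ^ 2 * k₁ ^ 2 + 8) - N * k₁)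
            * (Real.sqrt ((N : ℝ) ^ 2 * k₂ ^ 2 + 8) - N * k₂)
        + N * a₁ * k₁ / 4 * (Real.sqrt ((N : ℝ) ^ 2 * k₂ ^ 2 + 8) - N * k₂))
    (hl₂ : l₂ = -a₂ + N * k₂
        + a₂ / 8 * (Real.sqrt ((N : ℝ) ^ 2 * k₁ ^ 2 + 8) - N * k₁)
            * (Real.sqrt ((N : ℝ) ^ 2 * k₂ ^ 2 + 8) - N * k₂)
        + N * a₂ * k₂ / 4 * (Real.sqrt ((N : ℝ) ^ 2 * k₁ ^ 2 + 8) - N * k₁)) :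
    ∀ x : EuclideanSpace ℝ (Fin N),
      -(k₁ / 2) * lap z₁ x + ‖gradient z₁ x‖ ^ 2 / 2
        = ‖x‖ ^ 2 - (l₁ + a₁) * z₁ x + a₁ * z₂ x ∧
      -(k₂ / 2) * lap z₂ x + ‖gradient z₂ x‖ ^ 2 / 2
        = ‖x‖ ^ 2 - (l₂ + a₂) * z₂ x + a₂ * z₁ x :=
  stmt_10_general k₁ k₂ a₁ a₂ hk₁ hk₂ m₁ m₂ hm₁ hm₂ z₁ z₂ hz₁ hz₂ l₁ l₂ hl₁ hl₂
end

section
/- Let N ≥ 1, k₁, k₂ > 0, a₁, a₂ > 0, M₁, M₂ ≥ 0, λ₁, λ₂ > 0, and suppose B₁, B₂, D₁, D₂ < 0 satisfy: −4B₁² + 2M₁/k₁² + (2(λ₁+a₁)/k₁)B₁ − (2a₁k₂/k₁²)B₂ = 0, −2B₁N + 2M₁/k₁² + (2(λ₁+a₁)/k₁)D₁ − (2a₁k₂/k₁²)D₂ = 0, and the two symmetric equations with indices swapped. Let f₁, f₂ : ℝ^N → ℝ be continuous with 0 ≤ f_i(x) ≤ M_i(|x|²+1). Then the pair u(x) = e^{B₁|x|²+D₁},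 v(x) = e^{B₂|x|²+D₂} satisfies, for all x ∈ ℝ^N: −Δu(x) + u(x)·(2/k₁²)(f₁(x) + (λ₁+a₁)k₁ ln u(x)) ≤ (2a₁k₂/k₁²)·u(x)·ln v(x), and the symmetric inequality for v. -/
open InnerProductSpace Laplacian

lemma lap_eq_laplacian {N : ℕ} (f : EuclideanSpace ℝ (Fin N) → ℝ) : lap f = Δ f := by
  rw [laplacian_eq_iteratedFDeriv_orthonormalBasis f (EuclideanSpace.basisFun (Fin N) ℝ)]
  ext x
  simp only [lap, EuclideanSpace.basisFun_apply]

section Gaussian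

variable {E : Type*} [NormedAddCommGroup E] [InnerProductSpace ℝ E] (B D : ℝ)

lemma hasFDerivAt_exp_mul_norm_sq_add (y : E) :
    HasFDerivAt (fun z : E => Real.exp (B * ‖z‖ ^ 2 + D))
      ((2 * B * Real.exp (B * ‖y‖ ^ 2 + D)) • (innerSL ℝ y : E →L[ℝ] ℝ)) y := by
  convert (((hasStrictFDerivAt_norm_sq y).hasFDerivAt.const_mul B).add_const D).exp using 1
  ext w
  simp only [smul_apply, coe_innerSL_apply, smul_eq_mul, nsmul_eq_mul, Nat.cast_ofNat]
  ring

lemma iteratedFDeriv_two_exp_mul_norm_sq_add (x v w : E) :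
    iteratedFDeriv ℝ 2 (fun z : E => Real.exp (B * ‖z‖ ^ 2 + D)) x ![v, w]
      = Real.exp (B * ‖x‖ ^ 2 + D)
          * (2 * B * inner ℝ v w + 4 * B ^ 2 * (inner ℝ x v * inner ℝ x w)) := by
  set g : E → ℝ := fun z => Real.exp (B * ‖z‖ ^ 2 + D)
  have hg' : fderiv ℝ g = fun y => (2 * B * g y) • (innerSL ℝ y : E →L[ℝ] ℝ) :=
    funext fun y => (hasFDerivAt_exp_mul_norm_sq_add B D y).fderiv
  have hg'' : HasFDerivAt (fun y => (2 * B * g y) • (innerSL ℝ y : E →L[ℝ] ℝ)) _ x :=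
    ((hasFDerivAt_exp_mul_norm_sq_add B D x).const_mul (2 * B)).smul
      (innerSL ℝ : E →L[ℝ] E →L[ℝ] ℝ).hasFDerivAt
  have hinner (a b : E) : (innerSL ℝ : E →L[ℝ] E →L[ℝ] ℝ) a b = inner ℝ a b := rfl
  rw [iteratedFDeriv_two_apply, hg', hg''.fderiv]
  simp only [Matrix.cons_val_zero, Matrix.cons_val_one, Matrix.cons_val_fin_one, add_apply,
    smul_apply, ContinuousLinearMap.smulRight_apply, hinner, smul_eq_mul]
  ring

lemma laplacian_exp_mul_norm_sq_add [FiniteDimensional ℝ E] (x : E) :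
    Δ (fun z : E => Real.exp (B * ‖z‖ ^ 2 + D)) x
      = Real.exp (B * ‖x‖ ^ 2 + D) * (4 * B ^ 2 * ‖x‖ ^ 2 + 2 * B * Module.finrank ℝ E) := by
  set b := stdOrthonormalBasis ℝ E
  rw [laplacian_eq_iteratedFDeriv_orthonormalBasis _ b]
  simp only [iteratedFDeriv_two_exp_mul_norm_sq_add, ← Finset.mul_sum, Finset.sum_add_distrib]
  have hdim : ∑ i, inner ℝ (b i) (b i) = (Module.finrank ℝ E : ℝ) := by
    simp [b.norm_eq_one]
  have hnorm : ∑ i, inner ℝ x (b i) * inner ℝ x (b i) = ‖x‖ ^ 2 := by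
    rw [← real_inner_self_eq_norm_sq, ← b.sum_inner_mul_inner x x]
    simp_rw [real_inner_comm (b _) x]
  rw [hdim, hnorm]
  ring

end Gaussian

lemma exp_mul_norm_sq_add_subsolution {E : Type*} [NormedAddCommGroup E] [InnerProductSpace ℝ E]
    [FiniteDimensional ℝ E] {k k' a l M B B' D D' c : ℝ} (hk : k ≠ 0)
    (hB : -4 * B ^ 2 + 2 * M / k ^ 2 + 2 * (l + a) / k * B - 2 * a * k' / k ^ 2 * B' = 0)
    (hD : -2 * B * Module.finrank ℝ E + 2 * M / k ^ 2 + 2 * (l + a) / k * D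
        - 2 * a * k' / k ^ 2 * D' = 0)
    (x : E) (hc : c ≤ M * (‖x‖ ^ 2 + 1)) :
    -(Δ (fun z : E => Real.exp (B * ‖z‖ ^ 2 + D)) x)
        + Real.exp (B * ‖x‖ ^ 2 + D)
          * (2 / k ^ 2 * (c + (l + a) * k * Real.log (Real.exp (B * ‖x‖ ^ 2 + D))))
      ≤ 2 * a * k' / k ^ 2 * Real.exp (B * ‖x‖ ^ 2 + D)
          * Real.log (Real.exp (B' * ‖x‖ ^ 2 + D')) := by
  rw [laplacian_exp_mul_norm_sq_add, Real.log_exp, Real.log_exp]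
  have hc' : 2 / k ^ 2 * c ≤ 2 / k ^ 2 * (M * (‖x‖ ^ 2 + 1)) :=
    mul_le_mul_of_nonneg_left hc (by positivity)
  have hk' : 2 / k ^ 2 * ((l + a) * k) = 2 * (l + a) / k := by
    field_simp
  have hscalar : -(4 * B ^ 2 * ‖x‖ ^ 2 + 2 * B * Module.finrank ℝ E)
      + 2 / k ^ 2 * (c + (l + a) * k * (B * ‖x‖ ^ 2 + D))
      ≤ 2 * a * k' / k ^ 2 * (B' * ‖x‖ ^ 2 + D') := by
    linear_combination ‖x‖ ^ 2 * hB + hD + hc' + (B * ‖x‖ ^ 2 + D) * hk'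
  have := mul_le_mul_of_nonneg_left hscalar (Real.exp_pos (B * ‖x‖ ^ 2 + D)).le
  linarith

theorem stmt_15_general {N : ℕ} (k₁ k₂ a₁ a₂ M₁ M₂ l₁ l₂ B₁ B₂ D₁ D₂ : ℝ)
    (hk₁ : 0 < k₁) (hk₂ : 0 < k₂)
    (heq1 : -4 * B₁ ^ 2 + 2 * M₁ / k₁ ^ 2 + 2 * (l₁ + a₁) / k₁ * B₁
        - 2 * a₁ * k₂ / k₁ ^ 2 * B₂ = 0)
    (heq2 : -2 * B₁ * N + 2 * M₁ / k₁ ^ 2 + 2 * (l₁ + a₁) / k₁ * D₁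
        - 2 * a₁ * k₂ / k₁ ^ 2 * D₂ = 0)
    (heq3 : -4 * B₂ ^ 2 + 2 * M₂ / k₂ ^ 2 + 2 * (l₂ + a₂) / k₂ * B₂
        - 2 * a₂ * k₁ / k₂ ^ 2 * B₁ = 0)
    (heq4 : -2 * B₂ * N + 2 * M₂ / k₂ ^ 2 + 2 * (l₂ + a₂) / k₂ * D₂
        - 2 * a₂ * k₁ / k₂ ^ 2 * D₁ = 0)
    (f₁ f₂ : EuclideanSpace ℝ (Fin N) → ℝ)
    (hf₁ : ∀ x, 0 ≤ f₁ x ∧ f₁ x ≤ M₁ * (‖x‖ ^ 2 + 1))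
    (hf₂ : ∀ x, 0 ≤ f₂ x ∧ f₂ x ≤ M₂ * (‖x‖ ^ 2 + 1))
    (u v : EuclideanSpace ℝ (Fin N) → ℝ)
    (hu : ∀ x, u x = Real.exp (B₁ * ‖x‖ ^ 2 + D₁))
    (hv : ∀ x, v x = Real.exp (B₂ * ‖x‖ ^ 2 + D₂)) :
    ∀ x : EuclideanSpace ℝ (Fin N),
      -(lap u x) + u x * (2 / k₁ ^ 2 * (f₁ x + (l₁ + a₁) * k₁ * Real.log (u x)))
        ≤ 2 * a₁ * k₂ / k₁ ^ 2 * u x * Real.log (v x) ∧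
      -(lap v x) + v x * (2 / k₂ ^ 2 * (f₂ x + (l₂ + a₂) * k₂ * Real.log (v x)))
        ≤ 2 * a₂ * k₁ / k₂ ^ 2 * v x * Real.log (u x) := by
  obtain rfl : u = fun z => Real.exp (B₁ * ‖z‖ ^ 2 + D₁) := funext hu
  obtain rfl : v = fun z => Real.exp (B₂ * ‖z‖ ^ 2 + D₂) := funext hv
  rw [← finrank_euclideanSpace_fin (𝕜 := ℝ) (n := N)] at heq2 heq4
  intro x
  rw [lap_eq_laplacian, lap_eq_laplacian]
  exact ⟨exp_mul_norm_sq_add_subsolution hk₁.ne' heq1 heq2 x (hf₁ x).2,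
    exp_mul_norm_sq_add_subsolution hk₂.ne' heq3 heq4 x (hf₂ x).2⟩

theorem stmt_15 {N : ℕ} (hN : 1 ≤ N) (k₁ k₂ a₁ a₂ M₁ M₂ l₁ l₂ B₁ B₂ D₁ D₂ : ℝ)
    (hk₁ : 0 < k₁) (hk₂ : 0 < k₂) (ha₁ : 0 < a₁) (ha₂ : 0 < a₂)
    (hM₁ : 0 ≤ M₁) (hM₂ : 0 ≤ M₂) (hl₁ : 0 < l₁) (hl₂ : 0 < l₂)
    (hB₁ : B₁ < 0) (hB₂ : B₂ < 0) (hD₁ : D₁ < 0) (hD₂ : D₂ < 0)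
    (heq1 : -4 * B₁ ^ 2 + 2 * M₁ / k₁ ^ 2 + 2 * (l₁ + a₁) / k₁ * B₁
        - 2 * a₁ * k₂ / k₁ ^ 2 * B₂ = 0)
    (heq2 : -2 * B₁ * N + 2 * M₁ / k₁ ^ 2 + 2 * (l₁ + a₁) / k₁ * D₁
        - 2 * a₁ * k₂ / k₁ ^ 2 * D₂ = 0)
    (heq3 : -4 * B₂ ^ 2 + 2 * M₂ / k₂ ^ 2 + 2 * (l₂ + a₂) / k₂ * B₂
        - 2 * a₂ * k₁ / k₂ ^ 2 * B₁ = 0)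
    (heq4 : -2 * B₂ * N + 2 * M₂ / k₂ ^ 2 + 2 * (l₂ + a₂) / k₂ * D₂
        - 2 * a₂ * k₁ / k₂ ^ 2 * D₁ = 0)
    (f₁ f₂ : EuclideanSpace ℝ (Fin N) → ℝ)
    (hf₁c : Continuous f₁) (hf₂c : Continuous f₂)
    (hf₁ : ∀ x, 0 ≤ f₁ x ∧ f₁ x ≤ M₁ * (‖x‖ ^ 2 + 1))
    (hf₂ : ∀ x, 0 ≤ f₂ x ∧ f₂ x ≤ M₂ * (‖x‖ ^ 2 + 1))
    (u v : EuclideanSpace ℝ (Fin N) → ℝ)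
    (hu : ∀ x, u x = Real.exp (B₁ * ‖x‖ ^ 2 + D₁))
    (hv : ∀ x, v x = Real.exp (B₂ * ‖x‖ ^ 2 + D₂)) :
    ∀ x : EuclideanSpace ℝ (Fin N),
      -(lap u x) + u x * (2 / k₁ ^ 2 * (f₁ x + (l₁ + a₁) * k₁ * Real.log (u x)))
        ≤ 2 * a₁ * k₂ / k₁ ^ 2 * u x * Real.log (v x) ∧
      -(lap v x) + v x * (2 / k₂ ^ 2 * (f₂ x + (l₂ + a₂) * k₂ * Real.log (v x)))
        ≤ 2 * a₂ * k₁ / k₂ ^ 2 * v x * Real.log (u x) :=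
  stmt_15_general k₁ k₂ a₁ a₂ M₁ M₂ l₁ l₂ B₁ B₂ D₁ D₂ hk₁ hk₂ heq1 heq2 heq3 heq4 f₁ f₂ hf₁ hf₂ u v
    hu hv
end
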